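/- For any bounded C^2 domain D ⊂ R^n, there exists a constant c1 such that for all w, x, y, z ∈ ∂D, the operator norm of π_z ∘ (π_y − π_x) ∘ π_w is at most c1 ( |w−y|·|y−z| + |w−x|·|x−z| ), where π_x denotes orthogonal projection of R^n onto the tangent space T_x(∂D). -/

import Mathlib

/-!
Write `P a` for the orthogonal projection onto `(ℝ ∙ a)ᗮ`. For unit `b`, `c` one has
`P c - P b = ⟪b, ·⟫ • b - ⟪c, ·⟫ • c`, so `P d ∘ (P c - P b) ∘ P a` is a difference of two rank-one
maps `v ↦ ⟪b, P a v⟫ • P d b`. Since `P a v ⟂ a` and `P d d = 0`, each factor may be shifted: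
`⟪b, P a v⟫ = ⟪b - a, P a v⟫` and `P d b = P d (b - d)`, giving the bound
`‖a - b‖ * ‖b - d‖`. Applied to the normals, the Lipschitz bound turns this into `L²` times the
product of the distances of the base points.
-/

open scoped InnerProductSpace

namespace Submodule

variable {E : Type*} [NormedAddCommGroup E] [InnerProductSpace ℝ E]

theorem inner_starProjection_orthogonal_singleton (a v : E) :
    ⟪a, (ℝ ∙ a)ᗮ.starProjection v⟫_ℝ = 0 :=
  mem_orthogonal_singleton_iff_inner_right.mp (starProjection_apply_mem _ v)

theorem starProjection_orthogonal_singleton_self (a : E) :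
    (ℝ ∙ a)ᗮ.starProjection a = 0 :=
  (starProjection_apply_eq_zero_iff _).mpr (le_orthogonal_orthogonal _ (mem_span_singleton_self a))

theorem starProjection_orthogonal_unit_singleton {a : E} (ha : ‖a‖ = 1) (v : E) :
    (ℝ ∙ a)ᗮ.starProjection v = v - ⟪v, a⟫_ℝ • a := by
  rw [starProjection_orthogonal_val, starProjection_unit_singleton ℝ ha, real_inner_comm]

theorem starProjection_orthogonal_unit_singleton_sub {b c : E} (hb : ‖b‖ = 1) (hc : ‖c‖ = 1)
    (u : E) :
    ((ℝ ∙ c)ᗮ.starProjection - (ℝ ∙ b)ᗮ.starProjection) u = ⟪b, u⟫_ℝ • b - ⟪c, u⟫_ℝ • c := by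
  simp only [sub_apply, starProjection_orthogonal_val,
    starProjection_unit_singleton ℝ hb, starProjection_unit_singleton ℝ hc]
  abel

theorem abs_inner_starProjection_orthogonal_singleton_le (a b v : E) :
    |⟪b, (ℝ ∙ a)ᗮ.starProjection v⟫_ℝ| ≤ ‖a - b‖ * ‖v‖ := by
  have hperp : ⟪b, (ℝ ∙ a)ᗮ.starProjection v⟫_ℝ = ⟪b - a, (ℝ ∙ a)ᗮ.starProjection v⟫_ℝ := by
    rw [inner_sub_left, inner_starProjection_orthogonal_singleton, sub_zero]
  calc |⟪b, (ℝ ∙ a)ᗮ.starProjection v⟫_ℝ|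
      ≤ ‖b - a‖ * ‖(ℝ ∙ a)ᗮ.starProjection v‖ := hperp ▸ abs_real_inner_le_norm _ _
    _ ≤ ‖a - b‖ * ‖v‖ := by
      rw [norm_sub_rev]
      gcongr
      exact norm_starProjection_apply_le _ v

theorem norm_starProjection_orthogonal_singleton_le (b d : E) :
    ‖(ℝ ∙ d)ᗮ.starProjection b‖ ≤ ‖b - d‖ := by
  calc ‖(ℝ ∙ d)ᗮ.starProjection b‖ = ‖(ℝ ∙ d)ᗮ.starProjection (b - d)‖ := by
        rw [map_sub, starProjection_orthogonal_singleton_self, sub_zero]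
    _ ≤ ‖b - d‖ := norm_starProjection_apply_le _ _

theorem norm_inner_smul_starProjection_orthogonal_singleton_le (a b d v : E) :
    ‖⟪b, (ℝ ∙ a)ᗮ.starProjection v⟫_ℝ • (ℝ ∙ d)ᗮ.starProjection b‖ ≤
      ‖a - b‖ * ‖b - d‖ * ‖v‖ := by
  rw [norm_smul, Real.norm_eq_abs, mul_right_comm]
  exact mul_le_mul (abs_inner_starProjection_orthogonal_singleton_le a b v)
    (norm_starProjection_orthogonal_singleton_le b d) (norm_nonneg _) (by positivity)

theorem norm_starProjection_orthogonal_singleton_comp_sub_comp_le {b c : E} (hb : ‖b‖ = 1)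
    (hc : ‖c‖ = 1) (a d : E) :
    ‖(ℝ ∙ d)ᗮ.starProjection ∘L
        (((ℝ ∙ c)ᗮ.starProjection - (ℝ ∙ b)ᗮ.starProjection) ∘L (ℝ ∙ a)ᗮ.starProjection)‖ ≤
      ‖a - c‖ * ‖c - d‖ + ‖a - b‖ * ‖b - d‖ := by
  refine ContinuousLinearMap.opNorm_le_bound _ (by positivity) fun v => ?_
  set u := (ℝ ∙ a)ᗮ.starProjection v
  have hexpand : (ℝ ∙ d)ᗮ.starProjection
      (((ℝ ∙ c)ᗮ.starProjection - (ℝ ∙ b)ᗮ.starProjection) u) =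
        ⟪b, u⟫_ℝ • (ℝ ∙ d)ᗮ.starProjection b - ⟪c, u⟫_ℝ • (ℝ ∙ d)ᗮ.starProjection c := by
    rw [starProjection_orthogonal_unit_singleton_sub hb hc, map_sub, map_smul, map_smul]
  calc ‖(ℝ ∙ d)ᗮ.starProjection (((ℝ ∙ c)ᗮ.starProjection - (ℝ ∙ b)ᗮ.starProjection) u)‖
      ≤ ‖a - b‖ * ‖b - d‖ * ‖v‖ + ‖a - c‖ * ‖c - d‖ * ‖v‖ := by
        rw [hexpand]
        exact (norm_sub_le _ _).trans (add_le_add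
          (norm_inner_smul_starProjection_orthogonal_singleton_le a b d v)
          (norm_inner_smul_starProjection_orthogonal_singleton_le a c d v))
    _ = (‖a - c‖ * ‖c - d‖ + ‖a - b‖ * ‖b - d‖) * ‖v‖ := by ring

end Submodule

theorem proj_triple_composition_bound_general (n : ℕ)
    (D : Set (EuclideanSpace ℝ (Fin n)))
    (nvec : EuclideanSpace ℝ (Fin n) → EuclideanSpace ℝ (Fin n))
    (hunit : ∀ x ∈ frontier D, ‖nvec x‖ = 1)
    (L : ℝ)
    (hLip : ∀ x ∈ frontier D, ∀ y ∈ frontier D, ‖nvec x - nvec y‖ ≤ L * ‖x - y‖)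
    (proj : EuclideanSpace ℝ (Fin n) →
      (EuclideanSpace ℝ (Fin n) →L[ℝ] EuclideanSpace ℝ (Fin n)))
    (hproj : ∀ x v, proj x v = v - ⟪v, nvec x⟫_ℝ • nvec x) :
    ∃ c1 : ℝ, ∀ w ∈ frontier D, ∀ x ∈ frontier D, ∀ y ∈ frontier D, ∀ z ∈ frontier D,
      ‖(proj z).comp ((proj y - proj x).comp (proj w))‖ ≤
        c1 * (‖w - y‖ * ‖y - z‖ + ‖w - x‖ * ‖x - z‖) := by
  refine ⟨L ^ 2, fun w hw x hx y hy z hz => ?_⟩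
  have hproj_eq : ∀ p ∈ frontier D, proj p = (ℝ ∙ nvec p)ᗮ.starProjection :=
    fun p hp => ContinuousLinearMap.ext fun v => by
      rw [hproj, Submodule.starProjection_orthogonal_unit_singleton (hunit p hp)]
  have hLip_mul : ∀ p ∈ frontier D, ∀ q ∈ frontier D, ∀ r ∈ frontier D,
      ‖nvec p - nvec q‖ * ‖nvec q - nvec r‖ ≤ L ^ 2 * (‖p - q‖ * ‖q - r‖) :=
    fun p hp q hq r hr => calc
      ‖nvec p - nvec q‖ * ‖nvec q - nvec r‖ ≤ (L * ‖p - q‖) * (L * ‖q - r‖) :=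
        mul_le_mul (hLip p hp q hq) (hLip q hq r hr) (norm_nonneg _)
          ((norm_nonneg _).trans (hLip p hp q hq))
      _ = L ^ 2 * (‖p - q‖ * ‖q - r‖) := by ring
  rw [hproj_eq w hw, hproj_eq x hx, hproj_eq y hy, hproj_eq z hz]
  calc _ ≤ ‖nvec w - nvec y‖ * ‖nvec y - nvec z‖ + ‖nvec w - nvec x‖ * ‖nvec x - nvec z‖ :=
        Submodule.norm_starProjection_orthogonal_singleton_comp_sub_comp_le
          (hunit x hx) (hunit y hy) _ _
    _ ≤ L ^ 2 * (‖w - y‖ * ‖y - z‖) + L ^ 2 * (‖w - x‖ * ‖x - z‖) :=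
        add_le_add (hLip_mul w hw y hy z hz) (hLip_mul w hw x hx z hz)
    _ = L ^ 2 * (‖w - y‖ * ‖y - z‖ + ‖w - x‖ * ‖x - z‖) := by ring

/-- For any bounded `C²` domain `D ⊆ ℝⁿ` (with unit inward normal field
`nvec`, Lipschitz with constant `L` on the boundary) there exists `c1` such that for all
`w, x, y, z ∈ ∂D`, the operator norm of `π_z ∘ (π_y - π_x) ∘ π_w` is at most
`c1 * (‖w - y‖ * ‖y - z‖ + ‖w - x‖ * ‖x - z‖)`, where `π_x v = v - ⟪v, nvec x⟫ • nvec x`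
is orthogonal projection onto the tangent space at `x`. -/
theorem proj_triple_composition_bound (n : ℕ) (hn : 2 ≤ n)
    (D : Set (EuclideanSpace ℝ (Fin n))) (hD : Bornology.IsBounded D)
    (nvec : EuclideanSpace ℝ (Fin n) → EuclideanSpace ℝ (Fin n))
    (hunit : ∀ x ∈ frontier D, ‖nvec x‖ = 1)
    (L : ℝ)
    (hLip : ∀ x ∈ frontier D, ∀ y ∈ frontier D, ‖nvec x - nvec y‖ ≤ L * ‖x - y‖)
    (proj : EuclideanSpace ℝ (Fin n) →
      (EuclideanSpace ℝ (Fin n) →L[ℝ] EuclideanSpace ℝ (Fin n)))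
    (hproj : ∀ x v, proj x v = v - ⟪v, nvec x⟫_ℝ • nvec x) :
    ∃ c1 : ℝ, ∀ w ∈ frontier D, ∀ x ∈ frontier D, ∀ y ∈ frontier D, ∀ z ∈ frontier D,
      ‖(proj z).comp ((proj y - proj x).comp (proj w))‖ ≤
        c1 * (‖w - y‖ * ‖y - z‖ + ‖w - x‖ * ‖x - z‖) :=
  proj_triple_composition_bound_general n D nvec hunit L hLip proj hproj
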